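/- Consider the censored regression observation y = max(0, μ + ε) where ε ~ N(0, σ²), σ > 0, and μ ∈ ℝ. Then for every integer k ≥ 1, E[(y^{k+1} − y^k·μ − σ²·k·y^{k-1})·1{y>0}] = 0; equivalently, ∫_{(0,∞)} (u^{k+1} − u^k μ − σ² k u^{k-1}) φ_{μ,σ}(u) du = 0, where on the event {y > 0} one has y = μ + ε. -/

import Mathlib

/-!
Since `φ' = -(u - μ) φ / σ²`, the integrand is `-σ² (uᵏ φ(u))'`. So the integral over `(0, ∞)` is
`σ²` times the boundary value `0ᵏ φ(0) = 0`: at infinity `uᵏ φ(u)` tends to `0` because both it and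
its derivative are integrable, all moments of a Gaussian being finite.
-/

open MeasureTheory

/-- Density of the normal distribution `N(μ, σ²)` on `ℝ`. -/
noncomputable def normalPDF (μ σ u : ℝ) : ℝ :=
  (1 / (σ * Real.sqrt (2 * Real.pi))) * Real.exp (-(u - μ) ^ 2 / (2 * σ ^ 2))

open Filter Set NNReal Real Topology

namespace ProbabilityTheory

variable (μ : ℝ) (v : ℝ≥0)

lemma hasDerivAt_gaussianPDFReal (x : ℝ) :
    HasDerivAt (gaussianPDFReal μ v) (-((x - μ) / v) * gaussianPDFReal μ v x) x := by
  have h := ((((hasDerivAt_id x).sub_const μ).fun_pow 2).fun_neg.div_const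
    (2 * (v : ℝ))).exp.const_mul (√(2 * π * v))⁻¹
  rw [gaussianPDFReal_def]
  refine h.congr_deriv ?_
  simp only [id]
  ring

lemma integrable_pow_mul_gaussianPDFReal (n : ℕ) :
    Integrable fun x => x ^ n * gaussianPDFReal μ v x := by
  rcases eq_or_ne v 0 with rfl | hv
  · simp
  have hmoment : Integrable (fun x : ℝ => x ^ n) (gaussianReal μ v) := by
    refine (integrable_norm_iff (by fun_prop)).1 ?_
    simpa [norm_pow] using (memLp_id_gaussianReal (μ := μ) (v := v) n).integrable_norm_pow'
  rw [gaussianReal_of_var_ne_zero _ hv, integrable_withDensity_iff_integrable_smul'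
    (measurable_gaussianPDF _ _) (ae_of_all _ fun _ => gaussianPDF_lt_top)] at hmoment
  simpa [mul_comm] using hmoment

theorem integral_Ioi_stein_pow_mul_gaussianPDFReal (a : ℝ) (n : ℕ) :
    ∫ x in Ioi a, (x ^ (n + 1) - x ^ n * μ - v * n * x ^ (n - 1)) * gaussianPDFReal μ v x =
      v * (a ^ n * gaussianPDFReal μ v a) := by
  rcases eq_or_ne v 0 with rfl | hv
  · simp
  set F : ℝ → ℝ := fun x => -v * (x ^ n * gaussianPDFReal μ v x)
  have hF : ∀ x, HasDerivAt F
      ((x ^ (n + 1) - x ^ n * μ - v * n * x ^ (n - 1)) * gaussianPDFReal μ v x) x := by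
    intro x
    refine (((hasDerivAt_pow n x).mul (hasDerivAt_gaussianPDFReal μ v x)).const_mul
      _).congr_deriv ?_
    have : (v : ℝ) ≠ 0 := by exact_mod_cast hv
    field_simp
    ring
  have hF'_int : Integrable fun x =>
      (x ^ (n + 1) - x ^ n * μ - v * n * x ^ (n - 1)) * gaussianPDFReal μ v x := by
    refine (((integrable_pow_mul_gaussianPDFReal μ v (n + 1)).sub
      ((integrable_pow_mul_gaussianPDFReal μ v n).const_mul μ)).sub
      ((integrable_pow_mul_gaussianPDFReal μ v (n - 1)).const_mul (v * n))).congr ?_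
    filter_upwards with x
    simp only [Pi.sub_apply]
    ring
  have hF_lim : Tendsto F atTop (𝓝 0) :=
    tendsto_zero_of_hasDerivAt_of_integrableOn_Ioi (a := a) (fun x _ => hF x)
      hF'_int.integrableOn ((integrable_pow_mul_gaussianPDFReal μ v n).const_mul _).integrableOn
  rw [integral_Ioi_of_hasDerivAt_of_tendsto' (fun x _ => hF x) hF'_int.integrableOn hF_lim]
  simp [F]

end ProbabilityTheory

open ProbabilityTheory

lemma normalPDF_eq_gaussianPDFReal (μ : ℝ) {σ : ℝ} (hσ : 0 ≤ σ) :
    normalPDF μ σ = gaussianPDFReal μ ⟨σ ^ 2, sq_nonneg σ⟩ := by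
  ext u
  change _ = (√(2 * π * σ ^ 2))⁻¹ * rexp (-(u - μ) ^ 2 / (2 * σ ^ 2))
  rw [normalPDF, one_div, mul_comm (2 * π), sqrt_mul (sq_nonneg σ), sqrt_sq hσ]

theorem amemiya_moment_condition (μ σ : ℝ) (hσ : 0 < σ) (k : ℕ) (hk : 1 ≤ k) :
    ∫ u in Set.Ioi (0 : ℝ),
        (u ^ (k + 1) - u ^ k * μ - σ ^ 2 * (k : ℝ) * u ^ (k - 1)) * normalPDF μ σ u = 0 := by
  rw [normalPDF_eq_gaussianPDFReal μ hσ.le]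
  have h := integral_Ioi_stein_pow_mul_gaussianPDFReal μ ⟨σ ^ 2, sq_nonneg σ⟩ 0 k
  rwa [zero_pow (by omega), zero_mul, mul_zero] at h
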